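/- Let k be an algebraically closed field of characteristic p > 0 and let α = (α_n) be an admissible digit sequence. Let (a_n)_{n≥0} be a sequence with a_n ∈ k((t)) and supp(a_n) ⊆ p^nℤ \ (α_n p^n + p^{n+1}ℤ) for all n. Then the following are equivalent: (i) there exist y_n ∈ k((t)) with supp(y_n) ⊆ p^nℤ such that a_n = y_n − t^{α_n p^n}·y_{n+1} for all n ≥ 0; (ii) there exists N such that for all n ≥ N one has a_n ∈ k⟦t⟧, i.e., supp(a_n) ⊆ ℤ_{≥0}. -/

import Mathlib

/-- The element `t` of `k((t))`. -/
noncomputable def tt (k : Type*) [Field k] : LaurentSeries k := HahnSeries.single 1 1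

/-- A digit sequence `α` (with `0 ≤ α n < p`) is admissible if either all digits vanish,
or the `p`-adic integer `∑ αₙ pⁿ` is not a rational integer (i.e. `(α n)` is neither
eventually `0` nor eventually `p − 1`). -/
def AdmissibleDigits (p : ℕ) (α : ℕ → ℕ) : Prop :=
  (∀ n, α n = 0) ∨
    ¬ ((∃ N, ∀ n, N ≤ n → α n = 0) ∨ (∃ N, ∀ n, N ≤ n → α n = p - 1))

/-! Write `Cₙ = ∑_{t<n} αₜ pᵗ`. If `aₙ = yₙ - t^{αₙpⁿ} yₙ₊₁`, the gap in the support of `aₙ`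
forces `yₙ₊₁(j) = yₙ(j + αₙpⁿ)` for `p^{n+1} ∣ j`, hence `yₙ(j) = y₀(j + Cₙ)` on `pⁿℤ`. Since `α`
is not eventually `p - 1`, `pⁿ - Cₙ → ∞`, so for large `n` the negative coefficients of `yₙ`, and
with them those of `aₙ`, vanish.

Conversely, if `aₙ` is eventually a power series then `t^{Cₘ} aₘ → 0` `t`-adically: either
`Cₘ → ∞`, or all digits vanish and then `supp aₘ ⊆ pᵐℤ ∖ {0}` lies above `pᵐ`. So the tails
`yₙ = t^{-Cₙ} ∑_{m ≥ n} t^{Cₘ} aₘ` converge and solve the recursion. -/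

open Filter Finset HahnSeries

def partialOfDigits (p : ℕ) (α : ℕ → ℕ) (n : ℕ) : ℕ := ∑ t ∈ range n, α t * p ^ t

theorem partialOfDigits_succ (p : ℕ) (α : ℕ → ℕ) (n : ℕ) :
    partialOfDigits p α (n + 1) = partialOfDigits p α n + α n * p ^ n :=
  sum_range_succ _ _

theorem partialOfDigits_mono (p : ℕ) (α : ℕ → ℕ) : Monotone (partialOfDigits p α) :=
  fun _ _ h => sum_le_sum_of_subset (range_subset_range.2 h)

theorem tendsto_partialOfDigits_atTop {p : ℕ} {α : ℕ → ℕ} (hp : p ≠ 0)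
    (hα : ∃ᶠ n in atTop, α n ≠ 0) :
    Tendsto (partialOfDigits p α) atTop atTop := by
  refine tendsto_atTop_atTop_of_monotone (partialOfDigits_mono p α) fun s => ?_
  induction s with
  | zero => exact ⟨0, Nat.zero_le _⟩
  | succ s ih =>
    obtain ⟨M, hM⟩ := ih
    obtain ⟨n, hMn, hn⟩ := frequently_atTop.1 hα M
    refine ⟨n + 1, ?_⟩
    have : 1 ≤ α n * p ^ n := Nat.one_le_iff_ne_zero.2 (mul_ne_zero hn (pow_ne_zero _ hp))
    rw [partialOfDigits_succ]
    linarith [partialOfDigits_mono p α hMn]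

theorem partialOfDigits_add_partialOfDigits_compl {p : ℕ} {α : ℕ → ℕ} (hα : ∀ n, α n < p)
    (n : ℕ) :
    partialOfDigits p α n + partialOfDigits p (fun t => p - 1 - α t) n + 1 = p ^ n := by
  induction n with
  | zero => simp [partialOfDigits]
  | succ n ih =>
    obtain ⟨q, rfl⟩ : ∃ q, p = q + 1 := ⟨p - 1, by have := hα 0; omega⟩
    have hdigit : α n + (q + 1 - 1 - α n) = q := by have := hα n; omega
    calc _ = (partialOfDigits (q + 1) α n + partialOfDigits (q + 1) (fun t => q + 1 - 1 - α t) n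
          + 1) + (α n + (q + 1 - 1 - α n)) * (q + 1) ^ n := by
            rw [partialOfDigits_succ, partialOfDigits_succ]; ring
      _ = (q + 1) ^ (n + 1) := by rw [ih, hdigit]; ring

theorem pow_dvd_partialOfDigits_sub (p : ℕ) (α : ℕ → ℕ) {n m : ℕ} (h : n ≤ m) :
    (p : ℤ) ^ n ∣ (partialOfDigits p α m : ℤ) - partialOfDigits p α n := by
  rw [partialOfDigits, partialOfDigits, ← sum_range_add_sum_Ico _ h, Nat.cast_add,
    add_sub_cancel_left, Nat.cast_sum]
  refine dvd_sum fun t ht => ?_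
  push_cast
  exact dvd_mul_of_dvd_right (pow_dvd_pow _ (mem_Ico.1 ht).1) _

namespace AdmissibleDigits

variable {p : ℕ} {α : ℕ → ℕ}

theorem frequently_ne_pred (hp : 2 ≤ p) (h : AdmissibleDigits p α) :
    ∃ᶠ n in atTop, α n ≠ p - 1 := by
  rcases h with hzero | hnot
  · exact frequently_atTop.2 fun n => ⟨n, le_rfl, by rw [hzero]; omega⟩
  · exact not_eventually.1 fun hev => hnot (Or.inr (eventually_atTop.1 hev))

theorem eq_zero_or_frequently_ne_zero (h : AdmissibleDigits p α) :
    (∀ n, α n = 0) ∨ ∃ᶠ n in atTop, α n ≠ 0 :=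
  h.imp_right fun hnot => not_eventually.1 fun hev => hnot (Or.inl (eventually_atTop.1 hev))

end AdmissibleDigits

namespace LaurentSeries

variable {R : Type*} [Ring R]

def summableFamilyOfSupportTendsto (S : ℕ → LaurentSeries R)
    (hS : ∀ L : ℤ, ∀ᶠ m in atTop, ∀ i ∈ (S m).support, L ≤ i) : SummableFamily ℤ R ℕ where
  toFun := S
  isPWO_iUnion_support' := by
    obtain ⟨M, hM⟩ := eventually_atTop.1 (hS 0)
    refine (((isPWO_bUnion (range M)).2 fun m _ => (S m).isPWO_support).union
      (BddBelow.isWF (bddBelow_Ici (a := (0 : ℤ)))).isPWO).mono fun i hi => ?_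
    obtain ⟨m, hm⟩ := Set.mem_iUnion.1 hi
    by_cases hmM : m < M
    · exact Or.inl (Set.mem_biUnion (mem_range.2 hmM) hm)
    · exact Or.inr (hM m (not_lt.1 hmM) i hm)
  finite_co_support' g := by
    obtain ⟨M, hM⟩ := eventually_atTop.1 (hS (g + 1))
    refine (Set.finite_Iio M).subset fun m hm => ?_
    by_contra hmM
    have := hM m (not_lt.1 hmM) g hm
    omega

variable {S : ℕ → LaurentSeries R} (hS : ∀ L : ℤ, ∀ᶠ m in atTop, ∀ i ∈ (S m).support, L ≤ i)

noncomputable def tailSum (n : ℕ) : LaurentSeries R :=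
  (summableFamilyOfSupportTendsto (fun m => if n ≤ m then S m else 0) fun L =>
    (hS L).mono fun m hm i hi => hm i (by split_ifs at hi <;> simp_all)).hsum

theorem tailSum_sub_tailSum_succ (n : ℕ) : tailSum hS n - tailSum hS (n + 1) = S n := by
  rw [tailSum, tailSum, ← SummableFamily.hsum_sub, ← SummableFamily.hsum_single n (S n)]
  congr 1
  ext1 m
  simp only [SummableFamily.sub_apply, summableFamilyOfSupportTendsto, SummableFamily.coe_mk,
    SummableFamily.single_toFun]
  rcases lt_trichotomy m n with h | rfl | h
  · simp [h.ne, not_le.2 h, not_le.2 (h.trans n.lt_succ_self)]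
  · simp
  · simp [h.ne', h.le, Nat.succ_le_of_lt h]

theorem exists_le_of_mem_support_tailSum {n : ℕ} {i : ℤ} (hi : i ∈ (tailSum hS n).support) :
    ∃ m, n ≤ m ∧ i ∈ (S m).support := by
  obtain ⟨m, hm⟩ := Set.mem_iUnion.1 (SummableFamily.support_hsum_subset hi)
  simp only [summableFamilyOfSupportTendsto, SummableFamily.coe_mk] at hm
  split_ifs at hm with hnm
  · exact ⟨m, hnm, hm⟩
  · simp at hm

end LaurentSeries

section Twisted

variable {k : Type*} [Field k]

theorem tt_pow (c : ℕ) : tt k ^ c = single (c : ℤ) 1 := by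
  rw [tt, single_pow, one_pow, nsmul_eq_mul, mul_one]

theorem coeff_tt_pow_mul (c : ℕ) (x : LaurentSeries k) (j : ℤ) :
    (tt k ^ c * x).coeff j = x.coeff (j - c) := by
  rw [tt_pow, coeff_single_mul, one_mul]

theorem exists_twisted_solution {e : ℕ → ℕ} {C : ℕ → ℤ} (hC : ∀ n, C (n + 1) = C n + e n)
    (a : ℕ → LaurentSeries k) (ha : ∀ L : ℤ, ∀ᶠ m in atTop, ∀ i ∈ (a m).support, L ≤ i + C m) :
    ∃ y : ℕ → LaurentSeries k,
      (∀ n, ∀ j ∈ (y n).support, ∃ m, n ≤ m ∧ j + C n - C m ∈ (a m).support) ∧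
      ∀ n, a n = y n - tt k ^ e n * y (n + 1) := by
  set S : ℕ → LaurentSeries k := fun m => single (C m) 1 * a m
  have hS_coeff : ∀ m i, (S m).coeff i = (a m).coeff (i - C m) := fun m i => by
    simp only [S, coeff_single_mul, one_mul]
  have hS : ∀ L : ℤ, ∀ᶠ m in atTop, ∀ i ∈ (S m).support, L ≤ i := fun L =>
    (ha L).mono fun m hm i hi => by
      have := hm (i - C m) (by rwa [mem_support, ← hS_coeff]); omega
  refine ⟨fun n => single (-C n) 1 * LaurentSeries.tailSum hS n, fun n j hj => ?_, fun n => ?_⟩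
  · rw [mem_support, coeff_single_mul, one_mul, sub_neg_eq_add, ← mem_support] at hj
    obtain ⟨m, hnm, hm⟩ := LaurentSeries.exists_le_of_mem_support_tailSum hS hj
    rw [mem_support, hS_coeff] at hm
    exact ⟨m, hnm, hm⟩
  · have hshift : tt k ^ e n * single (-C (n + 1)) 1 = single (-C n) (1 : k) := by
      rw [tt_pow, single_mul_single, one_mul, hC]; congr 2; ring
    rw [← mul_assoc, hshift, ← mul_sub, LaurentSeries.tailSum_sub_tailSum_succ, ← mul_assoc,
      single_mul_single, neg_add_cancel, one_mul, single_zero_one, one_mul]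

variable {p : ℕ} {α : ℕ → ℕ} {a y : ℕ → LaurentSeries k}

theorem coeff_eq_coeff_zero_of_twisted
    (ha : ∀ n, ∀ i ∈ (a n).support, ¬ (p : ℤ) ^ (n + 1) ∣ i - (α n * p ^ n : ℕ))
    (hy : ∀ n, a n = y n - tt k ^ (α n * p ^ n) * y (n + 1)) (n : ℕ) {j : ℤ}
    (hj : (p : ℤ) ^ n ∣ j) : (y n).coeff j = (y 0).coeff (j + partialOfDigits p α n) := by
  induction n generalizing j with
  | zero => simp [partialOfDigits]
  | succ n ih =>
    set c : ℕ := α n * p ^ n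
    have hstep : (y (n + 1)).coeff j = (y n).coeff (j + c) := by
      have hzero : (a n).coeff (j + c) = 0 := by
        by_contra h
        exact ha n _ h (by rwa [add_sub_cancel_right])
      rw [hy n, coeff_sub, coeff_tt_pow_mul, add_sub_cancel_right, sub_eq_zero] at hzero
      exact hzero.symm
    have hj' : (p : ℤ) ^ n ∣ j + c :=
      dvd_add ((pow_dvd_pow _ n.le_succ).trans hj) (by simp [c, dvd_mul_left])
    rw [hstep, ih hj', partialOfDigits_succ]
    congr 1
    push_cast [c]
    ring

theorem eventually_coeff_neg_eq_zero_of_twisted (hα : ∀ n, α n < p)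
    (hfreq : ∃ᶠ n in atTop, α n ≠ p - 1)
    (ha : ∀ n, ∀ i ∈ (a n).support, ¬ (p : ℤ) ^ (n + 1) ∣ i - (α n * p ^ n : ℕ))
    (hy : ∀ n, a n = y n - tt k ^ (α n * p ^ n) * y (n + 1))
    (hy_supp : ∀ n, ∀ j ∈ (y n).support, (p : ℤ) ^ n ∣ j) :
    ∀ᶠ n in atTop, ∀ j < 0, (y n).coeff j = 0 := by
  have hp : p ≠ 0 := by have := hα 0; omega
  have hcompl : ∃ᶠ n in atTop, p - 1 - α n ≠ 0 := hfreq.mono fun n hn => by have := hα n; omega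
  filter_upwards [(tendsto_partialOfDigits_atTop hp hcompl).eventually_ge_atTop
    (-(y 0).order).toNat] with n hn j hj
  by_cases hdvd : (p : ℤ) ^ n ∣ j
  · rw [coeff_eq_coeff_zero_of_twisted ha hy n hdvd]
    apply coeff_eq_zero_of_lt_order
    have h1 : (p : ℤ) ^ n ≤ -j := Int.le_of_dvd (by omega) (dvd_neg.2 hdvd)
    have h2 := partialOfDigits_add_partialOfDigits_compl hα n
    have h3 := Int.self_le_toNat (-(y 0).order)
    zify at h2 hn
    linarith
  · by_contra h
    exact hdvd (hy_supp n j h)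

theorem exists_support_nonneg_of_twisted (hα : ∀ n, α n < p)
    (hfreq : ∃ᶠ n in atTop, α n ≠ p - 1)
    (ha : ∀ n, ∀ i ∈ (a n).support, ¬ (p : ℤ) ^ (n + 1) ∣ i - (α n * p ^ n : ℕ))
    (hy : ∀ n, a n = y n - tt k ^ (α n * p ^ n) * y (n + 1))
    (hy_supp : ∀ n, ∀ j ∈ (y n).support, (p : ℤ) ^ n ∣ j) :
    ∃ N, ∀ n, N ≤ n → ∀ i ∈ (a n).support, 0 ≤ i := by
  obtain ⟨N, hN⟩ :=
    eventually_atTop.1 (eventually_coeff_neg_eq_zero_of_twisted hα hfreq ha hy hy_supp)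
  refine ⟨N, fun n hn i hi => not_lt.1 fun hneg => hi ?_⟩
  rw [hy n, coeff_sub, coeff_tt_pow_mul, hN n hn i hneg, hN (n + 1) (by omega) _ (by omega),
    sub_zero]

theorem eventually_le_support_add_partialOfDigits (hp : 2 ≤ p) (hadm : AdmissibleDigits p α)
    (ha : ∀ n, ∀ i ∈ (a n).support,
      (p : ℤ) ^ n ∣ i ∧ ¬ (p : ℤ) ^ (n + 1) ∣ i - (α n * p ^ n : ℕ))
    (hN : ∃ N, ∀ n, N ≤ n → ∀ i ∈ (a n).support, 0 ≤ i) (L : ℤ) :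
    ∀ᶠ m in atTop, ∀ i ∈ (a m).support, L ≤ i + partialOfDigits p α m := by
  obtain ⟨N, hN⟩ := hN
  rcases hadm.eq_zero_or_frequently_ne_zero with hzero | hfreq
  · filter_upwards [eventually_ge_atTop N, eventually_ge_atTop L.toNat] with m hmN hmL i hi
    have hi0 : i ≠ 0 := fun h => (ha m i hi).2 (by simp [h, hzero])
    have h1 : (p : ℤ) ^ m ≤ i := Int.le_of_dvd (by have := hN m hmN i hi; omega) (ha m i hi).1
    have h2 : (m : ℤ) < (p : ℤ) ^ m := by exact_mod_cast Nat.lt_pow_self (by omega)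
    have h3 := Int.self_le_toNat L
    simp only [partialOfDigits, hzero, zero_mul, sum_const_zero, Nat.cast_zero, add_zero]
    omega
  · have hC := tendsto_partialOfDigits_atTop (p := p) (by omega) hfreq
    filter_upwards [eventually_ge_atTop N, hC.eventually_ge_atTop L.toNat] with m hmN hmL i hi
    have := hN m hmN i hi
    have := Int.self_le_toNat L
    omega

end Twisted

theorem twisted_rlim_trivial_iff_laurent_series_general
    (k : Type*) [Field k] (p : ℕ) [CharP k p] (hp : 0 < p)
    (α : ℕ → ℕ) (hα : ∀ n, α n < p) (hadm : AdmissibleDigits p α)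
    (a : ℕ → LaurentSeries k)
    (ha : ∀ n, ∀ i ∈ (a n).support,
      ((p : ℤ) ^ n) ∣ i ∧ ¬ ((p : ℤ) ^ (n + 1) ∣ i - (α n * p ^ n : ℕ))) :
    (∃ y : ℕ → LaurentSeries k,
        (∀ n, ∀ i ∈ (y n).support, ((p : ℤ) ^ n) ∣ i) ∧
        ∀ n, a n = y n - (tt k) ^ (α n * p ^ n) * y (n + 1))
      ↔ (∃ N, ∀ n, N ≤ n → ∀ i ∈ (a n).support, 0 ≤ i) := by
  have hp2 : 2 ≤ p := by
    have : NeZero p := ⟨hp.ne'⟩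
    exact (CharP.char_is_prime_of_pos k p).out.two_le
  constructor
  · rintro ⟨y, hy_supp, hy⟩
    exact exists_support_nonneg_of_twisted hα (hadm.frequently_ne_pred hp2)
      (fun n i hi => (ha n i hi).2) hy hy_supp
  · intro hN
    obtain ⟨y, hy_supp, hy⟩ := exists_twisted_solution (e := fun n => α n * p ^ n)
      (C := fun n => partialOfDigits p α n) (fun n => by simp [partialOfDigits_succ]) a
      (eventually_le_support_add_partialOfDigits hp2 hadm ha hN)
    refine ⟨y, fun n j hj => ?_, hy⟩
    obtain ⟨m, hnm, hm⟩ := hy_supp n j hj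
    have := dvd_add ((pow_dvd_pow _ hnm).trans (ha m _ hm).1)
      (pow_dvd_partialOfDigits_sub p α hnm)
    rwa [sub_add_sub_cancel, add_sub_cancel_right] at this

/-- **Triviality criterion over `k((t))` (Lemma 5.9 b)).**
Let `α` be an admissible digit sequence and `(a n)` a sequence in `k((t))` with
`supp(aₙ) ⊆ pⁿℤ \ (αₙ pⁿ + p^{n+1}ℤ)`.  Then the class of `(a n)` in the `α`-twisted
derived limit is trivial, i.e. there exist `yₙ ∈ k((t))` with `supp(yₙ) ⊆ pⁿℤ` and
`aₙ = yₙ − t^{αₙ pⁿ}·y_{n+1}` for all `n`, iff `aₙ ∈ k⟦t⟧` for all large `n`. -/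
theorem twisted_rlim_trivial_iff_laurent_series
    (k : Type*) [Field k] [IsAlgClosed k] (p : ℕ) [CharP k p] (hp : 0 < p)
    (α : ℕ → ℕ) (hα : ∀ n, α n < p) (hadm : AdmissibleDigits p α)
    (a : ℕ → LaurentSeries k)
    (ha : ∀ n, ∀ i ∈ (a n).support,
      ((p : ℤ) ^ n) ∣ i ∧ ¬ ((p : ℤ) ^ (n + 1) ∣ i - (α n * p ^ n : ℕ))) :
    (∃ y : ℕ → LaurentSeries k,
        (∀ n, ∀ i ∈ (y n).support, ((p : ℤ) ^ n) ∣ i) ∧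
        ∀ n, a n = y n - (tt k) ^ (α n * p ^ n) * y (n + 1))
      ↔ (∃ N, ∀ n, N ≤ n → ∀ i ∈ (a n).support, 0 ≤ i) :=
  twisted_rlim_trivial_iff_laurent_series_general k p hp α hα hadm a ha
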